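/- arXiv:2408.08484 — 2 statements merged into one kernel-verified Lean document; each statement's English description precedes it below -/
import Mathlib

section
/- Let G be a finite connected simple graph with positive edge weights, let e_b be a bridge of G, and let G1 and G2 be the two connected components of G after deleting e_b. Then the maximum minimal cut value of G equals the maximum of: the weight of e_b, the maximum minimal cut value of G1 (over all minimal cuts of G1, if any exist), and the maximum minimal cut value of G2 (over all minimal cuts of G2, if any exist). -/
/-!
Deleting the bridge `s(a, b)` splits `V` into the component `A` of `a` and its complement, the
component of `b`, and the bridge is the only edge between them. A minimal cut `(K, Kᶜ)` of `G`,
flipped so that `a ∉ K`, is either `(Aᶜ, A)`, of value `w s(a, b)`, or `K` lies inside one side,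
where it is a minimal cut with the same cut-set: retracting the other side onto the endpoint of
the bridge keeps the complement of `K` connected. Conversely, a minimal cut of a side avoiding
the endpoint of the bridge extends to `G` by adding the other side, attached through the bridge.
So the two sets of cut values are equal, not only their suprema.
-/

open Classical

/-- `IsMinimalCutOn G S K` says that `K` is one side of a minimal cut of the subgraph of `G`
induced on the vertex set `S`: `K ⊆ S`, both `K` and `S \ K` are nonempty, and the subgraphs
induced on `K` and on `S \ K` are connected. -/
def IsMinimalCutOn {V : Type*} (G : SimpleGraph V) (S K : Set V) : Prop :=
  K ⊆ S ∧ K.Nonempty ∧ (S \ K).Nonempty ∧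
    (G.induce K).Connected ∧ (G.induce (S \ K)).Connected

/-- The cut value of the cut `(K, S \ K)` of the subgraph of `G` induced on `S`:
the sum of the weights of all edges of `G` with one endpoint in `K` and the other in `S \ K`. -/
noncomputable def cutValueOn {V : Type*} [Fintype V] [DecidableEq V]
    (G : SimpleGraph V) (w : Sym2 V → ℝ) (S K : Set V) : ℝ :=
  ∑ e ∈ Finset.univ.filter
      (fun e : Sym2 V => e ∈ G.edgeSet ∧ ∃ x ∈ K, ∃ y ∈ S \ K, e = s(x, y)), w e

open Set

namespace SimpleGraph

variable {V W : Type*} {G : SimpleGraph V}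

theorem Reachable.map_of_forall_adj {H : SimpleGraph W} {f : V → W}
    (hf : ∀ ⦃x y⦄, G.Adj x y → H.Reachable (f x) (f y)) {u v : V} (h : G.Reachable u v) :
    H.Reachable (f u) (f v) := by
  obtain ⟨p⟩ := h
  induction p with
  | nil => rfl
  | cons hadj _ ih => exact (hf hadj).trans ih

theorem Reachable.of_forall_adj_imp {P : V → Prop} (hP : ∀ ⦃x y⦄, G.Adj x y → P x → P y)
    {u v : V} (h : G.Reachable u v) (hu : P u) : P v := by
  obtain ⟨p⟩ := h
  induction p with
  | nil => exact hu
  | cons hadj _ ih => exact ih (hP hadj hu)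

theorem connected_induce_setOf_reachable {G' : SimpleGraph V} (hle : G' ≤ G) (u : V) :
    (G.induce {v | G'.Reachable u v}).Connected := by
  have hsupp : {v | G'.Reachable u v} = (G'.connectedComponentMk u).supp := by
    ext v
    simp [ConnectedComponent.mem_supp_iff, ConnectedComponent.eq, reachable_comm]
  rw [hsupp]
  exact (ConnectedComponent.maximal_connected_induce_supp _).1.mono fun _ _ h => hle h

end SimpleGraph

section Cuts

variable {V : Type*} {G : SimpleGraph V} {S K : Set V}

theorem IsMinimalCutOn.diff (h : IsMinimalCutOn G S K) : IsMinimalCutOn G S (S \ K) := by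
  obtain ⟨hKS, hK, hSK, hKc, hSKc⟩ := h
  rw [← Set.sdiff_sdiff_cancel_left hKS] at hK hKc
  exact ⟨sdiff_subset, hSK, hK, hSKc, hKc⟩

def minimalCutValues [Fintype V] [DecidableEq V] (G : SimpleGraph V) (w : Sym2 V → ℝ)
    (S : Set V) : Set ℝ :=
  {r | ∃ K : Set V, IsMinimalCutOn G S K ∧ r = cutValueOn G w S K}

variable [Fintype V] [DecidableEq V] (w : Sym2 V → ℝ)

theorem cutValueOn_congr {S' K' : Set V}
    (h : ∀ e ∈ G.edgeSet,
      (∃ x ∈ K, ∃ y ∈ S \ K, e = s(x, y)) ↔ ∃ x ∈ K', ∃ y ∈ S' \ K', e = s(x, y)) :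
    cutValueOn G w S K = cutValueOn G w S' K' := by
  refine Finset.sum_congr ?_ fun _ _ => rfl
  ext e
  simp only [Finset.mem_filter, Finset.mem_univ, true_and]
  exact and_congr_right (h e)

theorem cutValueOn_diff (hKS : K ⊆ S) : cutValueOn G w S (S \ K) = cutValueOn G w S K := by
  refine cutValueOn_congr w fun e _ => ?_
  rw [Set.sdiff_sdiff_cancel_left hKS]
  exact ⟨fun ⟨x, hx, y, hy, he⟩ => ⟨y, hy, x, hx, he.trans Sym2.eq_swap⟩,
    fun ⟨x, hx, y, hy, he⟩ => ⟨y, hy, x, hx, he.trans Sym2.eq_swap⟩⟩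

theorem IsMinimalCutOn.exists_notMem (h : IsMinimalCutOn G S K) (v : V) :
    ∃ K', IsMinimalCutOn G S K' ∧ v ∉ K' ∧ cutValueOn G w S K' = cutValueOn G w S K := by
  by_cases hv : v ∈ K
  · exact ⟨S \ K, h.diff, fun hv' => hv'.2 hv, cutValueOn_diff w h.1⟩
  · exact ⟨K, h, hv, rfl⟩

end Cuts

namespace SimpleGraph

variable {V : Type*}

structure IsBridgeSide (G : SimpleGraph V) (A : Set V) (a b : V) : Prop where
  mem : a ∈ A
  notMem : b ∉ A
  adj : G.Adj a b
  eq_of_adj : ∀ ⦃x y⦄, G.Adj x y → x ∈ A → y ∉ A → x = a ∧ y = b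
  connected : (G.induce A).Connected
  connected_compl : (G.induce Aᶜ).Connected

namespace IsBridgeSide

variable {G : SimpleGraph V} {A S K : Set V} {a b : V} (h : IsBridgeSide G A a b)
include h

theorem compl : IsBridgeSide G Aᶜ b a where
  mem := h.notMem
  notMem := not_not.2 h.mem
  adj := h.adj.symm
  eq_of_adj _ _ hxy hx hy := (h.eq_of_adj hxy.symm (not_not.1 hy) hx).symm
  connected := h.connected_compl
  connected_compl := by rw [compl_compl]; exact h.connected

theorem subset_of_mem (hS : (G.induce S).Preconnected) (hab : ¬(a ∈ S ∧ b ∈ S)) {x : V}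
    (hxS : x ∈ S) (hxA : x ∈ A) : S ⊆ A := by
  intro y hyS
  refine (hS ⟨x, hxS⟩ ⟨y, hyS⟩).of_forall_adj_imp (P := fun z : S => z.1 ∈ A) ?_ hxA
  intro u v huv hu
  by_contra hv
  obtain ⟨hua, hvb⟩ := h.eq_of_adj huv hu hv
  exact hab ⟨hua ▸ u.2, hvb ▸ v.2⟩

theorem subset_or_subset_compl (hS : (G.induce S).Connected) (hab : ¬(a ∈ S ∧ b ∈ S)) :
    S ⊆ A ∨ S ⊆ Aᶜ := by
  obtain ⟨⟨x, hxS⟩⟩ := hS.nonempty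
  by_cases hxA : x ∈ A
  · exact .inl (h.subset_of_mem hS.preconnected hab hxS hxA)
  · exact .inr (h.compl.subset_of_mem hS.preconnected (fun hba => hab hba.symm) hxS hxA)

/-- Retracting `Aᶜ` onto `a` maps walks in `G.induce K` to walks in `G.induce (K ∩ A)`, since
every edge from `A` to `Aᶜ` starts at `a`. -/
theorem connected_induce_inter (hK : (G.induce K).Connected) (ha : a ∈ K) :
    (G.induce (K ∩ A)).Connected := by
  let r : K → ↥(K ∩ A) := fun x => if hx : x.1 ∈ A then ⟨x, x.2, hx⟩ else ⟨a, ha, h.mem⟩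
  have hr : ∀ ⦃x y : K⦄, (G.induce K).Adj x y → (G.induce (K ∩ A)).Reachable (r x) (r y) := by
    rintro ⟨x, hxK⟩ ⟨y, hyK⟩ hxy
    by_cases hx : x ∈ A <;> by_cases hy : y ∈ A
    · simp only [r, hx, hy, dite_true]
      exact Adj.reachable hxy
    · obtain ⟨rfl, -⟩ := h.eq_of_adj hxy hx hy
      simp only [r, hx, hy, dite_true, dite_false]
      rfl
    · obtain ⟨rfl, -⟩ := h.eq_of_adj hxy.symm hy hx
      simp only [r, hx, hy, dite_true, dite_false]
      rfl
    · simp only [r, hx, hy, dite_false]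
      rfl
  rw [connected_iff_exists_forall_reachable]
  refine ⟨⟨a, ha, h.mem⟩, fun ⟨x, hxK, hxA⟩ => ?_⟩
  simpa [r, h.mem, hxA] using (hK.preconnected ⟨a, ha⟩ ⟨x, hxK⟩).map_of_forall_adj hr

theorem isMinimalCutOn_univ : IsMinimalCutOn G univ A := by
  refine ⟨subset_univ A, ⟨a, h.mem⟩, ⟨b, trivial, h.notMem⟩, h.connected, ?_⟩
  rw [← compl_eq_univ_sdiff]
  exact h.connected_compl

theorem eq_of_isMinimalCutOn (hK : IsMinimalCutOn G univ K) (ha : a ∈ K) (hb : b ∉ K) :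
    K = A := by
  obtain ⟨-, -, -, hKc, hKcc⟩ := hK
  have hKA : K ⊆ A := h.subset_of_mem hKc.preconnected (fun hab => hb hab.2) ha h.mem
  have hAK : univ \ K ⊆ Aᶜ :=
    h.compl.subset_of_mem hKcc.preconnected (fun hba => hba.2.2 ha) ⟨trivial, hb⟩ h.notMem
  exact hKA.antisymm fun x hxA => by_contra fun hxK => hAK ⟨trivial, hxK⟩ hxA

theorem isMinimalCutOn_univ_iff (hKA : K ⊆ A) (ha : a ∉ K) :
    IsMinimalCutOn G univ K ↔ IsMinimalCutOn G A K := by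
  have hinter : (univ \ K) ∩ A = A \ K := by
    ext x
    simp [and_comm]
  have hunion : univ \ K = A \ K ∪ Aᶜ := by
    ext x
    have := @hKA x
    simp only [mem_sdiff, mem_univ, true_and, mem_union, mem_compl_iff]
    tauto
  constructor
  · rintro ⟨-, hK, -, hKc, hKcc⟩
    refine ⟨hKA, hK, ⟨a, h.mem, ha⟩, hKc, ?_⟩
    rw [← hinter]
    exact h.connected_induce_inter hKcc ⟨trivial, ha⟩
  · rintro ⟨-, hK, -, hKc, hAKc⟩
    refine ⟨subset_univ K, hK, ⟨a, trivial, ha⟩, hKc, ?_⟩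
    rw [hunion]
    exact connected_induce_union hAKc.preconnected h.connected_compl.preconnected
      ⟨h.mem, ha⟩ h.notMem h.adj

section Values

variable [Fintype V] [DecidableEq V] (w : Sym2 V → ℝ)

theorem cutValueOn_univ : cutValueOn G w univ A = w s(a, b) := by
  rw [← Finset.sum_singleton w s(a, b)]
  refine Finset.sum_congr ?_ fun _ _ => rfl
  ext e
  simp only [Finset.mem_filter, Finset.mem_univ, true_and, Finset.mem_singleton]
  constructor
  · rintro ⟨he, x, hx, y, ⟨-, hy⟩, rfl⟩
    obtain ⟨rfl, rfl⟩ := h.eq_of_adj he hx hy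
    rfl
  · rintro rfl
    exact ⟨h.adj, a, h.mem, b, ⟨trivial, h.notMem⟩, rfl⟩

theorem cutValueOn_univ_of_subset (hKA : K ⊆ A) (ha : a ∉ K) :
    cutValueOn G w univ K = cutValueOn G w A K := by
  refine cutValueOn_congr w fun e he => ⟨?_, ?_⟩
  · rintro ⟨x, hx, y, ⟨-, hy⟩, rfl⟩
    refine ⟨x, hx, y, ⟨by_contra fun hyA => ?_, hy⟩, rfl⟩
    exact ha ((h.eq_of_adj he (hKA hx) hyA).1 ▸ hx)
  · rintro ⟨x, hx, y, ⟨-, hy⟩, rfl⟩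
    exact ⟨x, hx, y, ⟨trivial, hy⟩, rfl⟩

theorem minimalCutValues_subset_univ : minimalCutValues G w A ⊆ minimalCutValues G w univ := by
  rintro _ ⟨K, hK, rfl⟩
  obtain ⟨K', hK', ha, hval⟩ := hK.exists_notMem w a
  refine ⟨K', (h.isMinimalCutOn_univ_iff hK'.1 ha).2 hK', ?_⟩
  rw [h.cutValueOn_univ_of_subset w hK'.1 ha, hval]

theorem minimalCutValues_univ_subset :
    minimalCutValues G w univ ⊆
      {w s(a, b)} ∪ minimalCutValues G w A ∪ minimalCutValues G w Aᶜ := by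
  rintro _ ⟨K₀, hK₀, rfl⟩
  obtain ⟨K, hK, ha, hval⟩ := hK₀.exists_notMem w a
  rw [← hval]
  by_cases hb : b ∈ K
  · left; left
    rw [h.compl.eq_of_isMinimalCutOn hK hb ha, h.compl.cutValueOn_univ, Sym2.eq_swap]
    rfl
  rcases h.subset_or_subset_compl hK.2.2.2.1 (fun hab => ha hab.1) with hKA | hKA
  · exact .inl (.inr ⟨K, (h.isMinimalCutOn_univ_iff hKA ha).1 hK,
      h.cutValueOn_univ_of_subset w hKA ha⟩)
  · exact .inr ⟨K, (h.compl.isMinimalCutOn_univ_iff hKA hb).1 hK,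
      h.compl.cutValueOn_univ_of_subset w hKA hb⟩

theorem minimalCutValues_univ :
    minimalCutValues G w univ =
      {w s(a, b)} ∪ minimalCutValues G w A ∪ minimalCutValues G w Aᶜ := by
  refine (h.minimalCutValues_univ_subset w).antisymm (union_subset (union_subset ?_ ?_) ?_)
  · exact singleton_subset_iff.2 ⟨A, h.isMinimalCutOn_univ, (h.cutValueOn_univ w).symm⟩
  · exact h.minimalCutValues_subset_univ w
  · exact h.compl.minimalCutValues_subset_univ w

end Values

end IsBridgeSide

section Bridge

variable {G : SimpleGraph V} {a b : V}

theorem Connected.reachable_deleteEdges_or_reachable (hG : G.Connected) (a b v : V) :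
    (G.deleteEdges {s(a, b)}).Reachable a v ∨ (G.deleteEdges {s(a, b)}).Reachable b v := by
  refine (hG.preconnected a v).of_forall_adj_imp
    (P := fun v => (G.deleteEdges {s(a, b)}).Reachable a v ∨
      (G.deleteEdges {s(a, b)}).Reachable b v) (fun x y hxy hx => ?_) (.inl .rfl)
  by_cases he : s(x, y) = s(a, b)
  · rcases Sym2.eq_iff.1 he with ⟨-, rfl⟩ | ⟨-, rfl⟩
    · exact .inr .rfl
    · exact .inl .rfl
  · have hxy' : (G.deleteEdges {s(a, b)}).Adj x y := (deleteEdges_adj ..).2 ⟨hxy, he⟩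
    exact hx.imp (·.trans hxy'.reachable) (·.trans hxy'.reachable)

theorem IsBridge.compl_setOf_reachable (hb : G.IsBridge s(a, b)) (hG : G.Connected) :
    {v | (G.deleteEdges {s(a, b)}).Reachable a v}ᶜ =
      {v | (G.deleteEdges {s(a, b)}).Reachable b v} := by
  ext v
  refine ⟨(hG.reachable_deleteEdges_or_reachable a b v).resolve_left, fun hbv hav => ?_⟩
  exact hb (hav.trans hbv.symm)

theorem IsBridge.isBridgeSide (hb : G.IsBridge s(a, b)) (hG : G.Connected) :
    G.IsBridgeSide {v | (G.deleteEdges {s(a, b)}).Reachable a v} a b where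
  mem := .rfl
  notMem := hb
  adj := hb.reachable_iff_adj.1 (hG a b)
  eq_of_adj x y hxy hx hy := by
    by_cases he : s(x, y) = s(a, b)
    · rcases Sym2.eq_iff.1 he with hxy' | ⟨-, rfl⟩
      · exact hxy'
      · exact absurd .rfl hy
    · exact absurd (hx.trans ((deleteEdges_adj ..).2 ⟨hxy, he⟩).reachable) hy
  connected := connected_induce_setOf_reachable (deleteEdges_le _) a
  connected_compl := by
    rw [hb.compl_setOf_reachable hG]
    exact connected_induce_setOf_reachable (deleteEdges_le _) b

end Bridge

end SimpleGraph

theorem maxMinimalCut_bridge_decomposition_general {V : Type*} [Fintype V] [DecidableEq V]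
    (G : SimpleGraph V) (hG : G.Connected)
    (w : Sym2 V → ℝ)
    (a b : V) (hbridge : G.IsBridge s(a, b)) :
    sSup {r : ℝ | ∃ K : Set V,
        IsMinimalCutOn G Set.univ K ∧ r = cutValueOn G w Set.univ K} =
      sSup ({w s(a, b)} ∪
        {r : ℝ | ∃ K : Set V,
            IsMinimalCutOn G {v | (G.deleteEdges {s(a, b)}).Reachable a v} K ∧
            r = cutValueOn G w {v | (G.deleteEdges {s(a, b)}).Reachable a v} K} ∪
        {r : ℝ | ∃ K : Set V,
            IsMinimalCutOn G {v | (G.deleteEdges {s(a, b)}).Reachable b v} K ∧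
            r = cutValueOn G w {v | (G.deleteEdges {s(a, b)}).Reachable b v} K}) := by
  rw [← hbridge.compl_setOf_reachable hG]
  exact congrArg sSup ((hbridge.isBridgeSide hG).minimalCutValues_univ w)

/-- Let `G` be a finite connected simple graph with positive edge weights,
let `s(a, b)` be a bridge of `G`, and let `G1`, `G2` be the two connected components of `G`
after deleting the bridge (the components of the endpoints `a` and `b`). Then the maximum
minimal cut value of `G` equals the maximum of: the weight of the bridge, the minimal cut
values of `G1`, and the minimal cut values of `G2`. -/
theorem maxMinimalCut_bridge_decomposition {V : Type*} [Fintype V] [DecidableEq V]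
    (G : SimpleGraph V) (hG : G.Connected)
    (w : Sym2 V → ℝ) (hw : ∀ e ∈ G.edgeSet, 0 < w e)
    (a b : V) (hab : G.Adj a b) (hbridge : G.IsBridge s(a, b)) :
    sSup {r : ℝ | ∃ K : Set V,
        IsMinimalCutOn G Set.univ K ∧ r = cutValueOn G w Set.univ K} =
      sSup ({w s(a, b)} ∪
        {r : ℝ | ∃ K : Set V,
            IsMinimalCutOn G {v | (G.deleteEdges {s(a, b)}).Reachable a v} K ∧
            r = cutValueOn G w {v | (G.deleteEdges {s(a, b)}).Reachable a v} K} ∪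
        {r : ℝ | ∃ K : Set V,
            IsMinimalCutOn G {v | (G.deleteEdges {s(a, b)}).Reachable b v} K ∧
            r = cutValueOn G w {v | (G.deleteEdges {s(a, b)}).Reachable b v} K}) :=
  maxMinimalCut_bridge_decomposition_general G hG w a b hbridge
end

section
/- Let n >= 2, let H be an n-by-n Hermitian matrix with eigenvalues lambda_1 <= ... <= lambda_n, let u be a nonzero vector in C^n, and let Z = H + u u* (the rank-one update by the outer product of u with itself), with eigenvalues mu_1 <= ... <= mu_n. Then the eigenvalues interlace: lambda_1 <= mu_1 <= lambda_2 <= mu_2 <= ... <= lambda_n <= mu_n. -/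
/-!
Both inequalities are Courant–Fischer dimension counts. If `⟪x, A x⟫ ≤ C ‖x‖²` on a subspace of
dimension `> i`, that subspace meets the span of the eigenvectors for `λᵢ, …` nontrivially, so
`λᵢ ≤ C`; dually for lower bounds. As `⟪x, Z x⟫ = ⟪x, H x⟫ + |⟪u, x⟫|²`, testing `H` on the span
of the eigenvectors of `Z` for `…, μᵢ` gives `λᵢ ≤ μᵢ`, and testing it on the span of those for
`μᵢ, …` cut by the hyperplane `u⊥`, where the two forms agree, gives `μᵢ ≤ λᵢ₊₁`.
-/

/-- The eigenvalues of a Hermitian matrix, listed in nondecreasing order. -/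
noncomputable def sortedEigenvalues {n : ℕ} {𝕜 : Type*} [RCLike 𝕜]
    {A : Matrix (Fin n) (Fin n) 𝕜} (hA : A.IsHermitian) : Fin n → ℝ :=
  hA.eigenvalues ∘ Tuple.sort hA.eigenvalues

open Matrix Module Submodule
open scoped InnerProductSpace

theorem Submodule.exists_mem_inf_ne_zero_of_finrank_lt_add {K V : Type*} [DivisionRing K]
    [AddCommGroup V] [Module K V] [FiniteDimensional K V] {s t : Submodule K V}
    (h : finrank K V < finrank K s + finrank K t) : ∃ x ∈ s ⊓ t, x ≠ 0 := by
  rw [← Submodule.ne_bot_iff]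
  intro hst
  exact h.not_ge (finrank_add_finrank_le_of_disjoint (disjoint_iff.2 hst))

theorem Submodule.finrank_le_finrank_inf_orthogonal_span_singleton_add_one {𝕜 E : Type*}
    [RCLike 𝕜] [NormedAddCommGroup E] [InnerProductSpace 𝕜 E] [FiniteDimensional 𝕜 E]
    (K : Submodule 𝕜 E) (v : E) : finrank 𝕜 K ≤ finrank 𝕜 ↥(K ⊓ (𝕜 ∙ v)ᗮ) + 1 := by
  have hline : finrank 𝕜 (𝕜 ∙ v) ≤ 1 := by simpa using finrank_span_le_card (R := 𝕜) {v}
  have horth := (𝕜 ∙ v).finrank_add_finrank_orthogonal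
  have hsup := (K ⊔ (𝕜 ∙ v)ᗮ).finrank_le
  have hsum := K.finrank_sup_add_finrank_inf_eq (𝕜 ∙ v)ᗮ
  omega

namespace OrthonormalBasis

variable {𝕜 E ι : Type*} [RCLike 𝕜] [NormedAddCommGroup E] [InnerProductSpace 𝕜 E] [Fintype ι]
  (b : OrthonormalBasis ι 𝕜 E)

theorem inner_eq_zero_of_mem_span_image {s : Set ι} {j : ι} (hj : j ∉ s) {x : E}
    (hx : x ∈ span 𝕜 (b '' s)) : ⟪b j, x⟫_𝕜 = 0 := by
  have hspan : span 𝕜 (b '' s) ≤ (𝕜 ∙ b j)ᗮ := span_le.2 <| by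
    rintro _ ⟨i, hi, rfl⟩
    exact mem_orthogonal_singleton_iff_inner_right.2
      (b.orthonormal.2 (ne_of_mem_of_not_mem hi hj).symm)
  exact mem_orthogonal_singleton_iff_inner_right.1 (hspan hx)

theorem finrank_span_image (s : Finset ι) :
    finrank 𝕜 (span 𝕜 (b '' s)) = s.card := by
  have h := finrank_span_eq_card (b.orthonormal.linearIndependent.comp
    (Subtype.val : ↥(s : Set ι) → ι) Subtype.val_injective)
  rw [Set.range_comp, Subtype.range_coe] at h
  simpa using h

variable {T : E →ₗ[𝕜] E} {μ : ι → ℝ}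

theorem re_inner_map_self_eq_sum (hT : ∀ i, T (b i) = (μ i : 𝕜) • b i) (x : E) :
    RCLike.re ⟪x, T x⟫_𝕜 = ∑ i, μ i * ‖⟪b i, x⟫_𝕜‖ ^ 2 := by
  have hTx : T x = ∑ i, ((μ i : 𝕜) * ⟪b i, x⟫_𝕜) • b i := by
    conv_lhs => rw [← b.sum_repr' x]
    simp only [map_sum, map_smul, hT, smul_smul, mul_comm]
  rw [hTx, inner_sum, map_sum]
  refine Finset.sum_congr rfl fun i _ => ?_
  rw [inner_smul_right, ← inner_conj_symm x (b i), mul_assoc, RCLike.mul_conj,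
    ← RCLike.ofReal_pow, ← RCLike.ofReal_mul, RCLike.ofReal_re]

theorem re_inner_map_self_le_of_mem_span (hT : ∀ i, T (b i) = (μ i : 𝕜) • b i) {s : Set ι}
    {C : ℝ} (hC : ∀ i ∈ s, μ i ≤ C) {x : E} (hx : x ∈ span 𝕜 (b '' s)) :
    RCLike.re ⟪x, T x⟫_𝕜 ≤ C * ‖x‖ ^ 2 := by
  rw [b.re_inner_map_self_eq_sum hT, ← b.sum_sq_norm_inner_right, Finset.mul_sum]
  refine Finset.sum_le_sum fun i _ => ?_
  by_cases hi : i ∈ s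
  · exact mul_le_mul_of_nonneg_right (hC i hi) (by positivity)
  · simp [b.inner_eq_zero_of_mem_span_image hi hx]

theorem le_re_inner_map_self_of_mem_span (hT : ∀ i, T (b i) = (μ i : 𝕜) • b i) {s : Set ι}
    {C : ℝ} (hC : ∀ i ∈ s, C ≤ μ i) {x : E} (hx : x ∈ span 𝕜 (b '' s)) :
    C * ‖x‖ ^ 2 ≤ RCLike.re ⟪x, T x⟫_𝕜 := by
  rw [b.re_inner_map_self_eq_sum hT, ← b.sum_sq_norm_inner_right, Finset.mul_sum]
  refine Finset.sum_le_sum fun i _ => ?_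
  by_cases hi : i ∈ s
  · exact mul_le_mul_of_nonneg_right (hC i hi) (by positivity)
  · simp [b.inner_eq_zero_of_mem_span_image hi hx]

end OrthonormalBasis

namespace Matrix.IsHermitian

variable {𝕜 : Type*} [RCLike 𝕜] {n : ℕ} {A : Matrix (Fin n) (Fin n) 𝕜} (hA : A.IsHermitian)

noncomputable def sortedEigenvectorBasis : OrthonormalBasis (Fin n) 𝕜 (EuclideanSpace 𝕜 (Fin n)) :=
  hA.eigenvectorBasis.reindex (Tuple.sort hA.eigenvalues).symm

theorem toEuclideanLin_sortedEigenvectorBasis (j : Fin n) :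
    toEuclideanLin A (hA.sortedEigenvectorBasis j) =
      (sortedEigenvalues hA j : 𝕜) • hA.sortedEigenvectorBasis j := by
  have h := hA.mulVec_eigenvectorBasis (Tuple.sort hA.eigenvalues j)
  rw [RCLike.real_smul_eq_coe_smul (K := 𝕜)] at h
  change WithLp.toLp 2 (A *ᵥ (hA.sortedEigenvectorBasis j).ofLp) = _
  rw [sortedEigenvectorBasis, OrthonormalBasis.reindex_apply, Equiv.symm_symm, h]
  rfl

theorem monotone_sortedEigenvalues : Monotone (sortedEigenvalues hA) :=
  Tuple.monotone_sort _

theorem re_inner_le_of_mem_span_Iic {i : Fin n} {x : EuclideanSpace 𝕜 (Fin n)}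
    (hx : x ∈ span 𝕜 (hA.sortedEigenvectorBasis '' Set.Iic i)) :
    RCLike.re ⟪x, toEuclideanLin A x⟫_𝕜 ≤ sortedEigenvalues hA i * ‖x‖ ^ 2 :=
  hA.sortedEigenvectorBasis.re_inner_map_self_le_of_mem_span
    hA.toEuclideanLin_sortedEigenvectorBasis (fun _ hj => hA.monotone_sortedEigenvalues hj) hx

theorem le_re_inner_of_mem_span_Ici {i : Fin n} {x : EuclideanSpace 𝕜 (Fin n)}
    (hx : x ∈ span 𝕜 (hA.sortedEigenvectorBasis '' Set.Ici i)) :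
    sortedEigenvalues hA i * ‖x‖ ^ 2 ≤ RCLike.re ⟪x, toEuclideanLin A x⟫_𝕜 :=
  hA.sortedEigenvectorBasis.le_re_inner_map_self_of_mem_span
    hA.toEuclideanLin_sortedEigenvectorBasis (fun _ hj => hA.monotone_sortedEigenvalues hj) hx

theorem finrank_span_sortedEigenvectorBasis_Iic (i : Fin n) :
    finrank 𝕜 (span 𝕜 (hA.sortedEigenvectorBasis '' Set.Iic i)) = i + 1 := by
  rw [← Finset.coe_Iic, OrthonormalBasis.finrank_span_image, Fin.card_Iic]

theorem finrank_span_sortedEigenvectorBasis_Ici (i : Fin n) :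
    finrank 𝕜 (span 𝕜 (hA.sortedEigenvectorBasis '' Set.Ici i)) = n - i := by
  rw [← Finset.coe_Ici, OrthonormalBasis.finrank_span_image, Fin.card_Ici]

theorem sortedEigenvalues_le_of_forall_re_inner_le {W : Submodule 𝕜 (EuclideanSpace 𝕜 (Fin n))}
    {i : Fin n} (hW : (i : ℕ) < finrank 𝕜 W) {C : ℝ}
    (hC : ∀ x ∈ W, RCLike.re ⟪x, toEuclideanLin A x⟫_𝕜 ≤ C * ‖x‖ ^ 2) :
    sortedEigenvalues hA i ≤ C := by
  have hdim : finrank 𝕜 (EuclideanSpace 𝕜 (Fin n)) <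
      finrank 𝕜 (span 𝕜 (hA.sortedEigenvectorBasis '' Set.Ici i)) + finrank 𝕜 W := by
    rw [finrank_euclideanSpace_fin, hA.finrank_span_sortedEigenvectorBasis_Ici]
    omega
  obtain ⟨x, ⟨hxV, hxW⟩, hx⟩ := exists_mem_inf_ne_zero_of_finrank_lt_add hdim
  have hx2 : 0 < ‖x‖ ^ 2 := by positivity
  exact le_of_mul_le_mul_right ((hA.le_re_inner_of_mem_span_Ici hxV).trans (hC x hxW)) hx2

theorem le_sortedEigenvalues_of_forall_le_re_inner {W : Submodule 𝕜 (EuclideanSpace 𝕜 (Fin n))}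
    {i : Fin n} (hW : n ≤ finrank 𝕜 W + i) {C : ℝ}
    (hC : ∀ x ∈ W, C * ‖x‖ ^ 2 ≤ RCLike.re ⟪x, toEuclideanLin A x⟫_𝕜) :
    C ≤ sortedEigenvalues hA i := by
  have hdim : finrank 𝕜 (EuclideanSpace 𝕜 (Fin n)) <
      finrank 𝕜 (span 𝕜 (hA.sortedEigenvectorBasis '' Set.Iic i)) + finrank 𝕜 W := by
    rw [finrank_euclideanSpace_fin, hA.finrank_span_sortedEigenvectorBasis_Iic]
    omega
  obtain ⟨x, ⟨hxV, hxW⟩, hx⟩ := exists_mem_inf_ne_zero_of_finrank_lt_add hdim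
  have hx2 : 0 < ‖x‖ ^ 2 := by positivity
  exact le_of_mul_le_mul_right ((hC x hxW).trans (hA.re_inner_le_of_mem_span_Iic hxV)) hx2

end Matrix.IsHermitian

theorem Matrix.re_inner_toEuclideanLin_vecMulVec_star_self {𝕜 m : Type*} [RCLike 𝕜] [Fintype m]
    [DecidableEq m] (u : m → 𝕜) (x : EuclideanSpace 𝕜 m) :
    RCLike.re ⟪x, toEuclideanLin (vecMulVec u (star u)) x⟫_𝕜 = ‖⟪WithLp.toLp 2 u, x⟫_𝕜‖ ^ 2 := by
  have h : toEuclideanLin (vecMulVec u (star u)) =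
      (InnerProductSpace.rankOne 𝕜 (WithLp.toLp 2 u) (WithLp.toLp 2 u)).toLinearMap := by
    rw [← InnerProductSpace.symm_toEuclideanLin_rankOne, LinearEquiv.apply_symm_apply]
  rw [h, ContinuousLinearMap.coe_coe, InnerProductSpace.rankOne_apply, inner_smul_right,
    ← inner_conj_symm x, RCLike.mul_conj, ← RCLike.ofReal_pow, RCLike.ofReal_re]

theorem eigenvalues_interlace_rankOne_update_general {n : ℕ}
    (H : Matrix (Fin n) (Fin n) ℂ) (hH : H.IsHermitian)
    (u : Fin n → ℂ)
    (hZ : (H + Matrix.vecMulVec u (star u)).IsHermitian) :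
    (∀ i : Fin n, sortedEigenvalues hH i ≤ sortedEigenvalues hZ i) ∧
    (∀ i : Fin n, ∀ h : (i : ℕ) + 1 < n,
      sortedEigenvalues hZ i ≤ sortedEigenvalues hH ⟨(i : ℕ) + 1, h⟩) := by
  set u' : EuclideanSpace ℂ (Fin n) := WithLp.toLp 2 u
  have hquad (x : EuclideanSpace ℂ (Fin n)) :
      RCLike.re ⟪x, toEuclideanLin (H + vecMulVec u (star u)) x⟫_ℂ =
        RCLike.re ⟪x, toEuclideanLin H x⟫_ℂ + ‖⟪u', x⟫_ℂ‖ ^ 2 := by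
    rw [map_add, LinearMap.add_apply, inner_add_right, map_add,
      re_inner_toEuclideanLin_vecMulVec_star_self]
  refine ⟨fun i => ?_, fun i h => ?_⟩
  · refine hH.sortedEigenvalues_le_of_forall_re_inner_le
      (hZ.finrank_span_sortedEigenvectorBasis_Iic i).ge fun x hx => ?_
    calc RCLike.re ⟪x, toEuclideanLin H x⟫_ℂ
        ≤ RCLike.re ⟪x, toEuclideanLin (H + vecMulVec u (star u)) x⟫_ℂ := by
          rw [hquad]; exact le_add_of_nonneg_right (sq_nonneg _)
      _ ≤ sortedEigenvalues hZ i * ‖x‖ ^ 2 := hZ.re_inner_le_of_mem_span_Iic hx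
  · refine hH.le_sortedEigenvalues_of_forall_le_re_inner
      (W := span ℂ (hZ.sortedEigenvectorBasis '' Set.Ici i) ⊓ (ℂ ∙ u')ᗮ) ?_ fun x hx => ?_
    · have hcut := finrank_le_finrank_inf_orthogonal_span_singleton_add_one
        (span ℂ (hZ.sortedEigenvectorBasis '' Set.Ici i)) u'
      rw [hZ.finrank_span_sortedEigenvectorBasis_Ici] at hcut
      show n ≤ _ + ((i : ℕ) + 1)
      omega
    · calc sortedEigenvalues hZ i * ‖x‖ ^ 2
          ≤ RCLike.re ⟪x, toEuclideanLin (H + vecMulVec u (star u)) x⟫_ℂ :=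
            hZ.le_re_inner_of_mem_span_Ici hx.1
        _ = RCLike.re ⟪x, toEuclideanLin H x⟫_ℂ := by
          rw [hquad, mem_orthogonal_singleton_iff_inner_right.1 hx.2, norm_zero]; ring

/-- **Interlacing for a rank-one Hermitian update.**
Let `n ≥ 2`, let `H` be an `n × n` Hermitian matrix with eigenvalues `λ₁ ≤ ... ≤ λₙ`, let `u`
be a nonzero vector in `ℂⁿ`, and let `Z = H + u uᴴ` (the rank-one update by the outer product
of `u` with itself), with eigenvalues `μ₁ ≤ ... ≤ μₙ`. Then the eigenvalues interlace:
`λ₁ ≤ μ₁ ≤ λ₂ ≤ μ₂ ≤ ... ≤ λₙ ≤ μₙ`. -/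
theorem eigenvalues_interlace_rankOne_update {n : ℕ} (hn : 2 ≤ n)
    (H : Matrix (Fin n) (Fin n) ℂ) (hH : H.IsHermitian)
    (u : Fin n → ℂ) (hu : u ≠ 0)
    (hZ : (H + Matrix.vecMulVec u (star u)).IsHermitian) :
    (∀ i : Fin n, sortedEigenvalues hH i ≤ sortedEigenvalues hZ i) ∧
    (∀ i : Fin n, ∀ h : (i : ℕ) + 1 < n,
      sortedEigenvalues hZ i ≤ sortedEigenvalues hH ⟨(i : ℕ) + 1, h⟩) :=
  eigenvalues_interlace_rankOne_update_general H hH u hZ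
end
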